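/- arXiv:1002.0231 — 11 statements merged into one kernel-verified Lean document; each statement's English description precedes it below -/
import Mathlib

section
/- The N=3 Cremmer–Gervais R-matrix satisfies unitarity: for all z, q ∈ ℂ with z ≠ 0, q ≠ 0, z² ≠ 1, q² ≠ 1, one has R₁₂(z) · R₂₁(z⁻¹) = ((q² − z²)(1 − q²z²)/((q² − 1)²(z² − 1)²)) · Id₉, where R₁₂(z) = R(z,q) and R₂₁(z) = P R(z,q) P. -/
/-!
Clearing denominators, `R(z) = N(q²; z², 1) / ((q² - 1)(z² - 1))` for a matrix
`N(Q; X, Y) = cgNumerator Q X Y` whose entries are linear forms in `(X, Y)`; by homogeneity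
`R(z⁻¹)` is a multiple of `N(q²; 1, z²)`. Conjugation by `P` only reindexes rows and columns by
`(i, j) ↦ (j, i)`, so unitarity reduces to the polynomial identity
`N(Q; X, Y) · P N(Q; Y, X) P = (QY - X)(QX - Y) · 1`, which holds over every commutative ring
and is checked entrywise.
-/

open Matrix Kronecker

/-- The `N = 3` Cremmer-Gervais `R`-matrix, rows indexed by pairs `(i,j)`,
columns by pairs `(k,l)`. -/
noncomputable def Rcg (z q : ℂ) : Matrix (Fin 3 × Fin 3) (Fin 3 × Fin 3) ℂ :=
  fun p r =>
    if p.1 = p.2 ∧ p.2 = r.1 ∧ r.1 = r.2 then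
      (q * z⁻¹ - q⁻¹ * z) / ((q - q⁻¹) * (z - z⁻¹))
    else if p.1 = r.1 ∧ p.2 = r.2 ∧ p.1 ≠ p.2 then
      (if (r.2 : ℕ) < (r.1 : ℕ) then -q else -q⁻¹) / (q - q⁻¹)
    else if r.2 = p.1 ∧ r.1 = p.2 ∧ p.1 ≠ p.2 then
      (if (r.1 : ℕ) < (r.2 : ℕ) then z else z⁻¹) / (z - z⁻¹)
    else if min (r.1 : ℕ) (r.2 : ℕ) < (p.1 : ℕ) ∧ (p.1 : ℕ) < max (r.1 : ℕ) (r.2 : ℕ)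
        ∧ (p.1 : ℕ) + (p.2 : ℕ) = (r.1 : ℕ) + (r.2 : ℕ) then
      (if (r.1 : ℕ) < (r.2 : ℕ) then 1 else -1)
    else 0

/-- The flip matrix `P` with entries `P^{ij}_{kl} = δ_{il} δ_{jk}`. -/
noncomputable def Pflip : Matrix (Fin 3 × Fin 3) (Fin 3 × Fin 3) ℂ :=
  fun p r => if p.1 = r.2 ∧ p.2 = r.1 then 1 else 0

/-- `R₂₁(z) = P R(z,q) P`. -/
noncomputable def R21 (z q : ℂ) : Matrix (Fin 3 × Fin 3) (Fin 3 × Fin 3) ℂ :=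
  Pflip * Rcg z q * Pflip

section Numerator

variable {R : Type*} [CommRing R]

def cgNumerator (Q X Y : R) : Matrix (Fin 3 × Fin 3) (Fin 3 × Fin 3) R :=
  fun p r =>
    if p.1 = p.2 ∧ p.2 = r.1 ∧ r.1 = r.2 then
      Q * Y - X
    else if p.1 = r.1 ∧ p.2 = r.2 ∧ p.1 ≠ p.2 then
      -(if (r.2 : ℕ) < (r.1 : ℕ) then Q else 1) * (X - Y)
    else if r.2 = p.1 ∧ r.1 = p.2 ∧ p.1 ≠ p.2 then
      (if (r.1 : ℕ) < (r.2 : ℕ) then X else Y) * (Q - 1)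
    else if min (r.1 : ℕ) (r.2 : ℕ) < (p.1 : ℕ) ∧ (p.1 : ℕ) < max (r.1 : ℕ) (r.2 : ℕ)
        ∧ (p.1 : ℕ) + (p.2 : ℕ) = (r.1 : ℕ) + (r.2 : ℕ) then
      (if (r.1 : ℕ) < (r.2 : ℕ) then 1 else -1) * ((Q - 1) * (X - Y))
    else 0

theorem cgNumerator_homogeneous (Q X Y c : R) :
    cgNumerator Q (c * X) (c * Y) = c • cgNumerator Q X Y := by
  ext p r
  simp only [cgNumerator, Matrix.smul_apply, smul_eq_mul]
  split_ifs <;> ring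

set_option maxHeartbeats 800000 in
theorem cgNumerator_mul_cgNumerator_swap (Q X Y : R) :
    cgNumerator Q X Y * (cgNumerator Q Y X).submatrix Prod.swap Prod.swap =
      ((Q * Y - X) * (Q * X - Y)) • (1 : Matrix (Fin 3 × Fin 3) (Fin 3 × Fin 3) R) := by
  ext p r
  simp only [Matrix.mul_apply, Matrix.submatrix_apply, Matrix.smul_apply, Matrix.one_apply,
    Fintype.sum_prod_type, Fin.sum_univ_three]
  fin_cases p <;> fin_cases r <;> simp [cgNumerator] <;> ring

end Numerator

theorem Pflip_eq_toMatrix_prodComm :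
    Pflip = (Equiv.prodComm (Fin 3) (Fin 3)).toPEquiv.toMatrix := by
  ext p r
  simp [Pflip, PEquiv.toMatrix_apply, Prod.ext_iff, eq_comm, and_comm]

theorem R21_eq_submatrix (z q : ℂ) : R21 z q = (Rcg z q).submatrix Prod.swap Prod.swap := by
  rw [R21, Pflip_eq_toMatrix_prodComm, PEquiv.toMatrix_toPEquiv_mul,
    PEquiv.mul_toMatrix_toPEquiv]
  rfl

theorem Rcg_eq_smul_cgNumerator {z q : ℂ} (hz : z ≠ 0) (hq : q ≠ 0) (hz2 : z ^ 2 ≠ 1)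
    (hq2 : q ^ 2 ≠ 1) :
    Rcg z q = ((q ^ 2 - 1) * (z ^ 2 - 1))⁻¹ • cgNumerator (q ^ 2) (z ^ 2) 1 := by
  have hq21 : q ^ 2 - 1 ≠ 0 := sub_ne_zero.mpr hq2
  have hz21 : z ^ 2 - 1 ≠ 0 := sub_ne_zero.mpr hz2
  ext p r
  simp only [Rcg, cgNumerator, Matrix.smul_apply, smul_eq_mul, mul_ite, mul_zero]
  split_ifs <;> field_simp

theorem Rcg_inv_eq_smul_cgNumerator {z q : ℂ} (hz : z ≠ 0) (hq : q ≠ 0) (hz2 : z ^ 2 ≠ 1)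
    (hq2 : q ^ 2 ≠ 1) :
    Rcg z⁻¹ q = ((q ^ 2 - 1) * (1 - z ^ 2))⁻¹ • cgNumerator (q ^ 2) 1 (z ^ 2) := by
  have hz2' : z⁻¹ ^ 2 ≠ 1 := by rwa [inv_pow, inv_ne_one]
  have hhom : cgNumerator (q ^ 2) (z⁻¹ ^ 2) 1 = z⁻¹ ^ 2 • cgNumerator (q ^ 2) 1 (z ^ 2) := by
    rw [← cgNumerator_homogeneous]
    congr 1 <;> field_simp
  have hz21 : 1 - z ^ 2 ≠ 0 := sub_ne_zero.mpr hz2.symm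
  have hq21 : q ^ 2 - 1 ≠ 0 := sub_ne_zero.mpr hq2
  rw [Rcg_eq_smul_cgNumerator (inv_ne_zero hz) hq hz2' hq2, hhom, smul_smul]
  congr 1
  field_simp

/-- Unitarity of the `N = 3` Cremmer-Gervais `R`-matrix. -/
theorem cremmer_gervais_unitarity (z q : ℂ) (hz : z ≠ 0) (hq : q ≠ 0)
    (hz2 : z ^ 2 ≠ 1) (hq2 : q ^ 2 ≠ 1) :
    Rcg z q * R21 z⁻¹ q =
      ((q ^ 2 - z ^ 2) * (1 - q ^ 2 * z ^ 2) / ((q ^ 2 - 1) ^ 2 * (z ^ 2 - 1) ^ 2)) •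
        (1 : Matrix (Fin 3 × Fin 3) (Fin 3 × Fin 3) ℂ) := by
  rw [R21_eq_submatrix, Rcg_eq_smul_cgNumerator hz hq hz2 hq2,
    Rcg_inv_eq_smul_cgNumerator hz hq hz2 hq2, Matrix.submatrix_smul, Pi.smul_apply,
    Pi.smul_apply, Matrix.smul_mul, Matrix.mul_smul, cgNumerator_mul_cgNumerator_swap,
    smul_smul, smul_smul]
  have hz21 : 1 - z ^ 2 ≠ 0 := sub_ne_zero.mpr hz2.symm
  have hq21 : q ^ 2 - 1 ≠ 0 := sub_ne_zero.mpr hq2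
  congr 1
  field_simp
  ring
end

section
/- The N=3 Cremmer–Gervais R-matrix satisfies T-invariance: for all z, q ∈ ℂ with z ≠ 0, q ≠ 0, z² ≠ 1, q² ≠ 1, one has R(z,q) = −(T ⊗ T) · R(z⁻¹, q⁻¹) · (T ⊗ T). -/
open Matrix Kronecker

/-- The matrix `T` with `T_{ij} = 1` iff `i + j = 2`. -/
noncomputable def Tmat : Matrix (Fin 3) (Fin 3) ℂ :=
  fun i j => if (i : ℕ) + (j : ℕ) = 2 then 1 else 0

theorem PEquiv.kronecker_toMatrix_toPEquiv {m n m' n' α : Type*} [DecidableEq m']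
    [DecidableEq n'] [MulZeroOneClass α] (e : m ≃ m') (f : n ≃ n') :
    e.toPEquiv.toMatrix ⊗ₖ f.toPEquiv.toMatrix =
      (e.prodCongr f).toPEquiv.toMatrix (α := α) := by
  ext ⟨a, b⟩ ⟨c, d⟩
  simp [PEquiv.toMatrix_apply, ← ite_and, and_comm]

theorem Tmat_eq_toMatrix_revPerm : Tmat = Fin.revPerm.toPEquiv.toMatrix := by
  ext i j
  fin_cases i <;> fin_cases j <;> simp [Tmat, PEquiv.toMatrix_apply]

theorem Tmat_kronecker_conj_eq_submatrix (M : Matrix (Fin 3 × Fin 3) (Fin 3 × Fin 3) ℂ) :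
    (Tmat ⊗ₖ Tmat) * M * (Tmat ⊗ₖ Tmat) =
      M.submatrix (Prod.map Fin.rev Fin.rev) (Prod.map Fin.rev Fin.rev) := by
  rw [Tmat_eq_toMatrix_revPerm, PEquiv.kronecker_toMatrix_toPEquiv,
    PEquiv.toMatrix_toPEquiv_mul, PEquiv.mul_toMatrix_toPEquiv]
  rfl

/-- Reversing the indices preserves each case of the definition but reverses the order of
`k` and `l`, while inverting `z` and `q` negates `q - q⁻¹` and `z - z⁻¹`. -/
theorem Rcg_inv_inv_rev (z q : ℂ) (p r : Fin 3 × Fin 3) :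
    Rcg z⁻¹ q⁻¹ (Prod.map Fin.rev Fin.rev p) (Prod.map Fin.rev Fin.rev r) = -Rcg z q p r := by
  obtain ⟨i, j⟩ := p
  obtain ⟨k, l⟩ := r
  simp only [Rcg, Prod.map, inv_inv, ne_eq, Fin.rev_inj, Fin.val_rev]
  split_ifs <;> first
    | omega
    | (try simp only [← neg_sub q, ← neg_sub z, div_neg, neg_mul_neg, neg_div]) <;> ring

theorem cremmer_gervais_T_invariance_general (z q : ℂ) :
    Rcg z q = -((Tmat ⊗ₖ Tmat) * Rcg z⁻¹ q⁻¹ * (Tmat ⊗ₖ Tmat)) := by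
  ext p r
  rw [Tmat_kronecker_conj_eq_submatrix, neg_apply, submatrix_apply, Rcg_inv_inv_rev, neg_neg]

/-- `T`-invariance of the `N = 3` Cremmer-Gervais `R`-matrix. -/
theorem cremmer_gervais_T_invariance (z q : ℂ) (hz : z ≠ 0) (hq : q ≠ 0)
    (hz2 : z ^ 2 ≠ 1) (hq2 : q ^ 2 ≠ 1) :
    Rcg z q = -((Tmat ⊗ₖ Tmat) * Rcg z⁻¹ q⁻¹ * (Tmat ⊗ₖ Tmat)) :=
  cremmer_gervais_T_invariance_general z q
end

section
/- Every matrix family of the first type solves the reflection equation for the N=3 Cremmer–Gervais R-matrix: for all B₁,B₂,D₁,D₂,E₁,E₂,E₃ ∈ ℂ, all q ∈ ℂ with q ≠ 0, q² ≠ 1, and every admissible pair (z₁,z₂), the function K(z) := K_I(z; B₁,B₂,D₁,D₂,E₁,E₂,E₃) satisfies R(z₁/z₂,q) K(z₁)₁ R₂₁(z₁z₂) K(z₂)₂ = K(z₂)₂ R(z₁z₂,q) K(z₁)₁ R₂₁(z₁/z₂). -/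
open Matrix Kronecker

/-- `M₁ = M ⊗ Id₃`. -/
noncomputable def Mleft (M : Matrix (Fin 3) (Fin 3) ℂ) :
    Matrix (Fin 3 × Fin 3) (Fin 3 × Fin 3) ℂ :=
  M ⊗ₖ (1 : Matrix (Fin 3) (Fin 3) ℂ)

/-- `M₂ = Id₃ ⊗ M`. -/
noncomputable def Mright (M : Matrix (Fin 3) (Fin 3) ℂ) :
    Matrix (Fin 3 × Fin 3) (Fin 3 × Fin 3) ℂ :=
  (1 : Matrix (Fin 3) (Fin 3) ℂ) ⊗ₖ M

/-- `K` satisfies the reflection equation with parameter `q` at the pair `(z₁, z₂)`. -/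
def ReflEq (q : ℂ) (K : ℂ → Matrix (Fin 3) (Fin 3) ℂ) (z₁ z₂ : ℂ) : Prop :=
  Rcg (z₁ / z₂) q * Mleft (K z₁) * R21 (z₁ * z₂) q * Mright (K z₂) =
    Mright (K z₂) * Rcg (z₁ * z₂) q * Mleft (K z₁) * R21 (z₁ / z₂) q

noncomputable def KI0 (z D₁ D₂ E₁ : ℂ) : Matrix (Fin 3) (Fin 3) ℂ :=
  E₁ ^ 2 • !![D₂ ^ 2 * z ^ 2, D₁ * D₂ * (z ^ 4 - 1), D₁ ^ 2 * z ^ 2 * (z ^ 4 - 1);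
      0, D₂ ^ 2 * z ^ 2, D₁ * D₂ * (z ^ 4 - 1);
      0, 0, D₂ ^ 2 * z ^ 2]

noncomputable def KI1 (z B₁ B₂ D₁ E₂ : ℂ) : Matrix (Fin 3) (Fin 3) ℂ :=
  (-(D₁ * E₂ * z ^ 2)) • !![B₁, 0, 0; 0, B₁, B₂ * (1 - z ^ 4); 0, 0, B₁ * z ^ 4]

/-- The first family of `K`-matrices. -/
noncomputable def KI (z B₁ B₂ D₁ D₂ E₁ E₂ E₃ : ℂ) : Matrix (Fin 3) (Fin 3) ℂ :=
  KI0 z D₁ D₂ E₁ - z ^ 6 • (Tmat * KI0 z⁻¹ D₂ D₁ E₃ * Tmat)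
    + KI1 z B₁ B₂ D₁ E₂ - z ^ 6 • (Tmat * KI1 z⁻¹ B₂ B₁ D₂ E₂ * Tmat)

/-!
Clearing denominators, `R(z, q)` is a scalar multiple of a matrix whose entries are polynomials
in `z²` and `q²`; at `z = z₁ / z₂` its homogenised form `Rhom (z₁²) (z₂²) (q²)` is linear in
`(z₁², z₂²)`. Likewise `z ↦ K_I(z)` is a polynomial matrix in `z²`. The scalars occur once on each
side of the reflection equation, which therefore reduces to a polynomial identity in `z₁²`, `z₂²`,
`q²` and the seven parameters, checked entry by entry.
-/

noncomputable def Rhom (u v Q : ℂ) : Matrix (Fin 3 × Fin 3) (Fin 3 × Fin 3) ℂ :=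
  Matrix.of fun p r =>
    if p.1 = p.2 ∧ p.2 = r.1 ∧ r.1 = r.2 then Q * v - u
    else if p.1 = r.1 ∧ p.2 = r.2 ∧ p.1 ≠ p.2 then
      (if (r.2 : ℕ) < (r.1 : ℕ) then -Q else -1) * (u - v)
    else if r.2 = p.1 ∧ r.1 = p.2 ∧ p.1 ≠ p.2 then
      (if (r.1 : ℕ) < (r.2 : ℕ) then u else v) * (Q - 1)
    else if min (r.1 : ℕ) (r.2 : ℕ) < (p.1 : ℕ) ∧ (p.1 : ℕ) < max (r.1 : ℕ) (r.2 : ℕ)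
        ∧ (p.1 : ℕ) + (p.2 : ℕ) = (r.1 : ℕ) + (r.2 : ℕ) then
      (if (r.1 : ℕ) < (r.2 : ℕ) then 1 else -1) * ((Q - 1) * (u - v))
    else 0

theorem Rcg_eq_smul_Rhom {z q u v : ℂ} (hz : z ≠ 0) (hq : q ≠ 0) (hq2 : q ^ 2 ≠ 1) (hv : v ≠ 0)
    (huv : u ≠ v) (h : z ^ 2 * v = u) :
    Rcg z q = ((q ^ 2 - 1) * (u - v))⁻¹ • Rhom u v (q ^ 2) := by
  have hQ : q ^ 2 - 1 ≠ 0 := sub_ne_zero.mpr hq2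
  have hz2 : z ^ 2 - 1 ≠ 0 := by
    rintro h'
    apply huv
    rw [← h, sub_eq_zero.mp h', one_mul]
  subst h
  have hden : z ^ 2 * v - v ≠ 0 := by
    rw [← sub_one_mul]
    exact mul_ne_zero hz2 hv
  ext p r
  simp only [Rcg, Rhom, Matrix.smul_apply, of_apply, smul_eq_mul]
  split_ifs <;> field_simp
  simp

theorem Pflip_mul_mul_Pflip (A : Matrix (Fin 3 × Fin 3) (Fin 3 × Fin 3) ℂ) :
    Pflip * A * Pflip = A.submatrix Prod.swap Prod.swap := by
  have : Pflip = (Equiv.prodComm (Fin 3) (Fin 3)).toPEquiv.toMatrix := by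
    ext p r
    simp [Pflip, PEquiv.toMatrix_apply, Prod.ext_iff, eq_comm, and_comm]
  rw [this, PEquiv.toMatrix_toPEquiv_mul, PEquiv.mul_toMatrix_toPEquiv]
  rfl

theorem Tmat_mul_mul_Tmat (M : Matrix (Fin 3) (Fin 3) ℂ) :
    Tmat * M * Tmat = M.submatrix Fin.rev Fin.rev := by
  have : Tmat = Fin.revPerm.toPEquiv.toMatrix := by
    ext i j
    fin_cases i <;> fin_cases j <;> simp [Tmat, PEquiv.toMatrix_apply]
  rw [this, PEquiv.toMatrix_toPEquiv_mul, PEquiv.mul_toMatrix_toPEquiv]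
  rfl

noncomputable def KIx (x B₁ B₂ D₁ D₂ E₁ E₂ E₃ : ℂ) : Matrix (Fin 3) (Fin 3) ℂ :=
  !![E₁ ^ 2 * D₂ ^ 2 * x - E₃ ^ 2 * D₁ ^ 2 * x ^ 2 - B₁ * D₁ * E₂ * x + B₂ * D₂ * E₂,
      E₁ ^ 2 * D₁ * D₂ * (x ^ 2 - 1),
      E₁ ^ 2 * D₁ ^ 2 * x * (x ^ 2 - 1);
    E₃ ^ 2 * D₁ * D₂ * (x ^ 3 - x) + B₁ * D₂ * E₂ * (x ^ 2 - 1),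
      E₁ ^ 2 * D₂ ^ 2 * x - E₃ ^ 2 * D₁ ^ 2 * x ^ 2 - B₁ * D₁ * E₂ * x + B₂ * D₂ * E₂ * x ^ 2,
      E₁ ^ 2 * D₁ * D₂ * (x ^ 2 - 1) + B₂ * D₁ * E₂ * x * (x ^ 2 - 1);
    E₃ ^ 2 * D₂ ^ 2 * (x ^ 2 - 1),
      E₃ ^ 2 * D₁ * D₂ * (x ^ 3 - x),
      E₁ ^ 2 * D₂ ^ 2 * x - E₃ ^ 2 * D₁ ^ 2 * x ^ 2 - B₁ * D₁ * E₂ * x ^ 3 + B₂ * D₂ * E₂ * x ^ 2]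

theorem KI_eq_KIx {z : ℂ} (hz : z ≠ 0) (B₁ B₂ D₁ D₂ E₁ E₂ E₃ : ℂ) :
    KI z B₁ B₂ D₁ D₂ E₁ E₂ E₃ = KIx (z ^ 2) B₁ B₂ D₁ D₂ E₁ E₂ E₃ := by
  ext i j
  simp only [KI, KI0, KI1, KIx, Tmat_mul_mul_Tmat, Matrix.add_apply, Matrix.sub_apply,
    Matrix.smul_apply, submatrix_apply, of_apply, smul_eq_mul]
  fin_cases i <;> fin_cases j <;>
    simp only [Fin.reduceFinMk, Fin.reduceRev, cons_val, inv_pow] <;> field_simp <;> ring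

section KroneckerOne

variable {α ι l m n : Type*} [Semiring α]

theorem mul_kronecker_one_apply [Fintype l] [Fintype m] [DecidableEq m]
    (A : Matrix ι (l × m) α) (K : Matrix l n α) (i : ι) (j : n × m) :
    (A * (K ⊗ₖ (1 : Matrix m m α))) i j = ∑ a, A i (a, j.2) * K a j.1 := by
  simp [Matrix.mul_apply, Fintype.sum_prod_type, Matrix.one_apply]

theorem mul_one_kronecker_apply [Fintype l] [Fintype m] [DecidableEq l]
    (A : Matrix ι (l × m) α) (K : Matrix m n α) (i : ι) (j : l × n) :
    (A * ((1 : Matrix l l α) ⊗ₖ K)) i j = ∑ b, A i (j.1, b) * K b j.2 := by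
  simp [Matrix.mul_apply, Fintype.sum_prod_type, Matrix.one_apply]

theorem one_kronecker_mul_apply [Fintype l] [Fintype n] [DecidableEq l]
    (K : Matrix m n α) (A : Matrix (l × n) ι α) (i : l × m) (j : ι) :
    (((1 : Matrix l l α) ⊗ₖ K) * A) i j = ∑ d, K i.2 d * A (i.1, d) j := by
  simp [Matrix.mul_apply, Fintype.sum_prod_type, Matrix.one_apply]

end KroneckerOne

theorem reflection_smul {α n : Type*} [CommSemiring α] [Fintype n] (a b : α)
    {A A' B B' X Y : Matrix n n α} (h : A * X * B' * Y = Y * B * X * A') :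
    a • A * X * (b • B') * Y = Y * (b • B) * X * (a • A') := by
  simp only [Matrix.smul_mul, Matrix.mul_smul, smul_smul, h, mul_comm a b]

set_option maxHeartbeats 3000000 in
theorem Rhom_KIx_reflection (x y Q B₁ B₂ D₁ D₂ E₁ E₂ E₃ : ℂ) :
    Rhom x y Q * Mleft (KIx x B₁ B₂ D₁ D₂ E₁ E₂ E₃) *
        (Rhom (x * y) 1 Q).submatrix Prod.swap Prod.swap * Mright (KIx y B₁ B₂ D₁ D₂ E₁ E₂ E₃) =
      Mright (KIx y B₁ B₂ D₁ D₂ E₁ E₂ E₃) * Rhom (x * y) 1 Q * Mleft (KIx x B₁ B₂ D₁ D₂ E₁ E₂ E₃) *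
        (Rhom x y Q).submatrix Prod.swap Prod.swap := by
  ext ⟨a, b⟩ ⟨c, d⟩
  unfold Mleft Mright
  -- `↓` makes the Kronecker lemmas fire before `mul_apply`: a product with `K ⊗ₖ 1` or `1 ⊗ₖ K`
  -- becomes a sum of three terms instead of nine.
  simp only [↓mul_kronecker_one_apply, ↓mul_one_kronecker_apply, ↓one_kronecker_mul_apply,
    Matrix.mul_apply, Fintype.sum_prod_type, Fin.sum_univ_three, submatrix_apply,
    Prod.swap_prod_mk]
  fin_cases a <;> fin_cases b <;> fin_cases c <;> fin_cases d <;>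
    simp +decide only [Rhom, KIx, of_apply, cons_val, Fin.reduceFinMk, ite_true, ite_false,
      mul_zero, zero_mul, add_zero, zero_add, mul_one, one_mul] <;>
    ring1

/-- Every matrix of the first family solves the reflection equation. -/
theorem KI_solves_reflection_equation (B₁ B₂ D₁ D₂ E₁ E₂ E₃ q : ℂ)
    (hq : q ≠ 0) (hq2 : q ^ 2 ≠ 1) (z₁ z₂ : ℂ) (hz₁ : z₁ ≠ 0) (hz₂ : z₂ ≠ 0)
    (hzz : z₁ ^ 2 ≠ z₂ ^ 2) (hz₁₂ : z₁ ^ 2 * z₂ ^ 2 ≠ 1) :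
    ReflEq q (fun z => KI z B₁ B₂ D₁ D₂ E₁ E₂ E₃) z₁ z₂ := by
  have hdiv := Rcg_eq_smul_Rhom (div_ne_zero hz₁ hz₂) hq hq2 (pow_ne_zero 2 hz₂) hzz
    (by field_simp : (z₁ / z₂) ^ 2 * z₂ ^ 2 = z₁ ^ 2)
  have hmul := Rcg_eq_smul_Rhom (mul_ne_zero hz₁ hz₂) hq hq2 one_ne_zero hz₁₂
    (by ring : (z₁ * z₂) ^ 2 * 1 = z₁ ^ 2 * z₂ ^ 2)
  simp only [ReflEq, R21, Pflip_mul_mul_Pflip, hdiv, hmul, submatrix_smul,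
    KI_eq_KIx hz₁, KI_eq_KIx hz₂]
  exact reflection_smul _ _ (Rhom_KIx_reflection ..)
end

section
/- The K-matrices of the first type satisfy unitarity: for all B₁,B₂,D₁,D₂,E₁,E₂,E₃ ∈ ℂ and every z ∈ ℂ with z ≠ 0, there exists a scalar ρ ∈ ℂ such that K_I(z; B₁,B₂,D₁,D₂,E₁,E₂,E₃) · K_I(z⁻¹; B₁,B₂,D₁,D₂,E₁,E₂,E₃) = ρ · Id₃. -/
open Matrix Kronecker

/-! Conjugation by `T` reverses the order of rows and columns, so for `z ≠ 0` the matrix `K_I(z)`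
is a matrix of polynomials in `z`. Multiplying it by the same matrix at `z⁻¹` gives
`p(z) p(z⁻¹) · Id` with `p(z) = D₂²E₁² + B₂D₂E₂ z² - B₁D₁E₂ z⁴ - D₁²E₃² z⁶`. -/

theorem Tmat_eq_toMatrix_revPerm_s6 : Tmat = (Fin.revPerm : Equiv.Perm (Fin 3)).toPEquiv.toMatrix := by
  ext i j
  fin_cases i <;> fin_cases j <;> rfl

theorem KI_eq_of_ne_zero {z : ℂ} (hz : z ≠ 0) (B₁ B₂ D₁ D₂ E₁ E₂ E₃ : ℂ) :
    KI z B₁ B₂ D₁ D₂ E₁ E₂ E₃ =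
      !![B₂ * D₂ * E₂ + (D₂ ^ 2 * E₁ ^ 2 - B₁ * D₁ * E₂) * z ^ 2 - D₁ ^ 2 * E₃ ^ 2 * z ^ 4,
          D₁ * D₂ * E₁ ^ 2 * (z ^ 4 - 1),
          D₁ ^ 2 * E₁ ^ 2 * z ^ 2 * (z ^ 4 - 1);
        (B₁ * D₂ * E₂ + D₁ * D₂ * E₃ ^ 2 * z ^ 2) * (z ^ 4 - 1),
          (D₂ ^ 2 * E₁ ^ 2 - B₁ * D₁ * E₂) * z ^ 2 + (B₂ * D₂ * E₂ - D₁ ^ 2 * E₃ ^ 2) * z ^ 4,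
          (D₁ * D₂ * E₁ ^ 2 + B₂ * D₁ * E₂ * z ^ 2) * (z ^ 4 - 1);
        D₂ ^ 2 * E₃ ^ 2 * (z ^ 4 - 1),
          D₁ * D₂ * E₃ ^ 2 * z ^ 2 * (z ^ 4 - 1),
          D₂ ^ 2 * E₁ ^ 2 * z ^ 2 + (B₂ * D₂ * E₂ - D₁ ^ 2 * E₃ ^ 2) * z ^ 4
            - B₁ * D₁ * E₂ * z ^ 6] := by
  rw [KI, Tmat_mul_mul_Tmat, Tmat_mul_mul_Tmat]
  ext i j
  fin_cases i <;> fin_cases j <;> simp [KI0, KI1] <;> field_simp <;> ring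

def KIfactor (z B₁ B₂ D₁ D₂ E₁ E₂ E₃ : ℂ) : ℂ :=
  D₂ ^ 2 * E₁ ^ 2 + B₂ * D₂ * E₂ * z ^ 2 - B₁ * D₁ * E₂ * z ^ 4 - D₁ ^ 2 * E₃ ^ 2 * z ^ 6

theorem KI_mul_KI_inv {z : ℂ} (hz : z ≠ 0) (B₁ B₂ D₁ D₂ E₁ E₂ E₃ : ℂ) :
    KI z B₁ B₂ D₁ D₂ E₁ E₂ E₃ * KI z⁻¹ B₁ B₂ D₁ D₂ E₁ E₂ E₃ =
      (KIfactor z B₁ B₂ D₁ D₂ E₁ E₂ E₃ * KIfactor z⁻¹ B₁ B₂ D₁ D₂ E₁ E₂ E₃) • 1 := by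
  rw [KI_eq_of_ne_zero hz, KI_eq_of_ne_zero (inv_ne_zero hz), mul_fin_three, one_fin_three,
    smul_of, smul_vec3]
  ext i j
  fin_cases i <;> fin_cases j <;> simp [KIfactor] <;> field_simp <;> ring

/-- The `K`-matrices of the first family satisfy unitarity. -/
theorem KI_unitarity (B₁ B₂ D₁ D₂ E₁ E₂ E₃ : ℂ) (z : ℂ) (hz : z ≠ 0) :
    ∃ ρ : ℂ, KI z B₁ B₂ D₁ D₂ E₁ E₂ E₃ * KI z⁻¹ B₁ B₂ D₁ D₂ E₁ E₂ E₃ =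
      ρ • (1 : Matrix (Fin 3) (Fin 3) ℂ) :=
  ⟨_, KI_mul_KI_inv hz B₁ B₂ D₁ D₂ E₁ E₂ E₃⟩
end

section
/- Transformation of the first family under G-conjugation: for all B₁,B₂,D₁,D₂,E₁,E₂,E₃ ∈ ℂ, every ω ∈ ℂ with ω³ = 1, and every z ∈ ℂ with z ≠ 0, one has G · K_I(z; B₁,B₂,D₁,D₂,E₁,E₂,E₃) · G⁻¹ = K_I(z; B₁, ω²B₂, ω²D₁, D₂, E₁, ωE₂, ωE₃), where G = diag(1, ω, ω²). -/
open Matrix Kronecker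

/-- `G = diag(1, ω, ω²)`. -/
noncomputable def Gmat (ω : ℂ) : Matrix (Fin 3) (Fin 3) ℂ :=
  Matrix.diagonal ![1, ω, ω ^ 2]

/-!
Conjugation by `G = diag(1, ω, ω²)` multiplies the `(i, j)` entry by `ω^(i-j)`, so on each of the
blocks `K_{I,0}`, `K_{I,1}` it amounts to rescaling the parameters. The reversal matrix `T` turns
`G` into `T G T = ω² G⁻¹`, where `G⁻¹ = diag(1, ω², ω)` as `ω³ = 1`, so `G`-conjugation of a
`T`-sandwiched block is the `T`-sandwich of its `G⁻¹`-conjugate, again a rescaling of parameters.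
-/

section

variable {ω : ℂ}

theorem Gmat_mul_Tmat (hω : ω ^ 3 = 1) :
    Gmat ω * Tmat = ω ^ 2 • (Tmat * diagonal ![1, ω ^ 2, ω]) := by
  ext i j
  fin_cases i <;> fin_cases j <;> simp [Gmat, Tmat] <;> grind

theorem Tmat_mul_diagonal (hω : ω ^ 3 = 1) :
    Tmat * diagonal ![1, ω ^ 2, ω] = ω • (Gmat ω * Tmat) := by
  ext i j
  fin_cases i <;> fin_cases j <;> simp [Gmat, Tmat] <;> grind

theorem Gmat_conj_Tmat_conj (hω : ω ^ 3 = 1) (M : Matrix (Fin 3) (Fin 3) ℂ) :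
    Gmat ω * (Tmat * M * Tmat) * diagonal ![1, ω ^ 2, ω] =
      Tmat * (diagonal ![1, ω ^ 2, ω] * M * Gmat ω) * Tmat := by
  calc Gmat ω * (Tmat * M * Tmat) * diagonal ![1, ω ^ 2, ω]
      = (Gmat ω * Tmat) * M * (Tmat * diagonal ![1, ω ^ 2, ω]) := by simp only [Matrix.mul_assoc]
    _ = (ω ^ 2 * ω) • (Tmat * diagonal ![1, ω ^ 2, ω] * M * (Gmat ω * Tmat)) := by
      rw [← smul_smul, ← Matrix.mul_smul, ← Matrix.smul_mul, ← Matrix.smul_mul,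
        ← Gmat_mul_Tmat hω, ← Tmat_mul_diagonal hω]
    _ = _ := by rw [← pow_succ, hω, one_smul]; simp only [Matrix.mul_assoc]

theorem Gmat_conj_KI0 (hω : ω ^ 3 = 1) (z D₁ D₂ E₁ : ℂ) :
    Gmat ω * KI0 z D₁ D₂ E₁ * diagonal ![1, ω ^ 2, ω] = KI0 z (ω ^ 2 * D₁) D₂ E₁ := by
  ext i j
  fin_cases i <;> fin_cases j <;> simp [Gmat, KI0] <;> grind

theorem diagonal_conj_KI0 (hω : ω ^ 3 = 1) (z D₁ D₂ E₁ : ℂ) :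
    diagonal ![1, ω ^ 2, ω] * KI0 z D₂ D₁ E₁ * Gmat ω = KI0 z D₂ (ω ^ 2 * D₁) (ω * E₁) := by
  ext i j
  fin_cases i <;> fin_cases j <;> simp [Gmat, KI0] <;> grind

theorem Gmat_conj_KI1 (hω : ω ^ 3 = 1) (z B₁ B₂ D₁ E₂ : ℂ) :
    Gmat ω * KI1 z B₁ B₂ D₁ E₂ * diagonal ![1, ω ^ 2, ω] =
      KI1 z B₁ (ω ^ 2 * B₂) (ω ^ 2 * D₁) (ω * E₂) := by
  ext i j
  fin_cases i <;> fin_cases j <;> simp [Gmat, KI1] <;> grind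

theorem diagonal_conj_KI1 (hω : ω ^ 3 = 1) (z B₁ B₂ D₂ E₂ : ℂ) :
    diagonal ![1, ω ^ 2, ω] * KI1 z B₂ B₁ D₂ E₂ * Gmat ω =
      KI1 z (ω ^ 2 * B₂) B₁ D₂ (ω * E₂) := by
  ext i j
  fin_cases i <;> fin_cases j <;> simp [Gmat, KI1] <;> grind

end

theorem KI_G_conjugation_general (B₁ B₂ D₁ D₂ E₁ E₂ E₃ ω : ℂ) (hω : ω ^ 3 = 1)
    (z : ℂ) :
    Gmat ω * KI z B₁ B₂ D₁ D₂ E₁ E₂ E₃ * Matrix.diagonal ![1, ω ^ 2, ω] =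
      KI z B₁ (ω ^ 2 * B₂) (ω ^ 2 * D₁) D₂ E₁ (ω * E₂) (ω * E₃) := by
  simp only [KI, Matrix.mul_add, Matrix.add_mul, Matrix.mul_sub, Matrix.sub_mul,
    Matrix.mul_smul, Matrix.smul_mul, Gmat_conj_Tmat_conj hω, Gmat_conj_KI0 hω,
    diagonal_conj_KI0 hω, Gmat_conj_KI1 hω, diagonal_conj_KI1 hω]

/-- Transformation of the first family under `G`-conjugation. -/
theorem KI_G_conjugation (B₁ B₂ D₁ D₂ E₁ E₂ E₃ ω : ℂ) (hω : ω ^ 3 = 1)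
    (z : ℂ) (hz : z ≠ 0) :
    Gmat ω * KI z B₁ B₂ D₁ D₂ E₁ E₂ E₃ * Matrix.diagonal ![1, ω ^ 2, ω] =
      KI z B₁ (ω ^ 2 * B₂) (ω ^ 2 * D₁) D₂ E₁ (ω * E₂) (ω * E₃) :=
  KI_G_conjugation_general B₁ B₂ D₁ D₂ E₁ E₂ E₃ ω hω z
end

section
/- Transformation of the second family under T-conjugation: for all b,F₁,F₂,G₁,G₂,G₃ ∈ ℂ and every z ∈ ℂ with z ≠ 0, one has T · K_II(z; b,F₁,F₂,G₁,G₂,G₃) · T = z⁴ · K_II(z⁻¹; b, F₂, F₁, −G₃, G₂, −G₁). -/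
open Matrix Kronecker

noncomputable def KII0 (z F₁ G₁ G₂ G₃ : ℂ) : Matrix (Fin 3) (Fin 3) ℂ :=
  (-F₁) • !![G₃, 0, G₁ * (1 - z ^ 4); 0, G₃, G₂ * (1 - z ^ 4); 0, 0, G₃ * z ^ 4]

/-- The second family of `K`-matrices. -/
noncomputable def KII (z b F₁ F₂ G₁ G₂ G₃ : ℂ) : Matrix (Fin 3) (Fin 3) ℂ :=
  (b * z ^ 2) • (1 : Matrix (Fin 3) (Fin 3) ℂ) + KII0 z F₁ G₁ G₂ G₃
    - z ^ 4 • (Tmat * KII0 z⁻¹ F₂ G₃ (-G₂) G₁ * Tmat)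

/-! Conjugation by the involution `T` moves `T K_{II,0}(z⁻¹) T` to `K_{II,0}(z⁻¹)` and
`K_{II,0}(z)` to `T K_{II,0}(z) T`; the parameter swap in the claim only flips the sign of each
`K_{II,0}` term, because `K_{II,0}` is linear in `(G₁, G₂, G₃)`. So apart from `T² = 1` no matrix
entries need to be computed. -/

theorem Tmat_mul_Tmat : Tmat * Tmat = 1 := by
  ext i j
  fin_cases i <;> fin_cases j <;> simp [Tmat, Matrix.mul_apply, Fin.sum_univ_three]

theorem KII0_neg (z F G₁ G₂ G₃ : ℂ) : KII0 z F (-G₁) (-G₂) (-G₃) = -KII0 z F G₁ G₂ G₃ := by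
  rw [KII0, KII0, ← smul_neg]
  congr 1
  ext i j
  fin_cases i <;> fin_cases j <;> simp [neg_mul]

theorem conj_smul_one_add_sub_smul_conj {𝕜 A : Type*} [CommRing 𝕜] [Ring A] [Algebra 𝕜 A]
    {T : A} (hT : T * T = 1) (c w : 𝕜) (X Y : A) :
    T * (c • 1 + X - w • (T * Y * T)) * T = c • 1 + T * X * T - w • Y := by
  simp only [mul_add, add_mul, mul_sub, sub_mul, mul_smul_comm, smul_mul_assoc, mul_one,
    ← mul_assoc, hT, one_mul]
  rw [mul_assoc Y, hT, mul_one]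

/-- Transformation of the second family under `T`-conjugation. -/
theorem KII_T_conjugation (b F₁ F₂ G₁ G₂ G₃ : ℂ) (z : ℂ) (hz : z ≠ 0) :
    Tmat * KII z b F₁ F₂ G₁ G₂ G₃ * Tmat =
      z ^ 4 • KII z⁻¹ b F₂ F₁ (-G₃) G₂ (-G₁) := by
  have hK₀ : KII0 z⁻¹ F₂ (-G₃) G₂ (-G₁) = -KII0 z⁻¹ F₂ G₃ (-G₂) G₁ := by
    simpa using KII0_neg z⁻¹ F₂ G₃ (-G₂) G₁
  have hw : z ^ 4 * z⁻¹ ^ 4 = 1 := by field_simp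
  have hc : z ^ 4 * (b * z⁻¹ ^ 2) = b * z ^ 2 := by field_simp
  rw [KII, KII, conj_smul_one_add_sub_smul_conj Tmat_mul_Tmat, KII0_neg, hK₀, inv_inv]
  simp only [Matrix.mul_neg, Matrix.neg_mul, smul_sub, smul_add, smul_neg, smul_smul, hw, hc,
    one_smul]
  abel
end

section
/- G-conjugation preserves solutions of the reflection equation: let q ∈ ℂ with q ≠ 0, q² ≠ 1, let ω ∈ ℂ with ω³ = 1, and set G = diag(1, ω, ω²). If K assigns a 3×3 complex matrix K(z) to each nonzero z ∈ ℂ and satisfies the reflection equation (with parameter q) at every admissible pair (z₁,z₂), then the function z ↦ G K(z) G⁻¹ also satisfies the reflection equation (with parameter q) at every admissible pair. -/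
open Matrix Kronecker

/-
The diagonal matrix `G ⊗ G` has entry `ω ^ (i + j)` at `(i, j)`, and every entry of `R(z, q)` and
of the flip `P` with row `(i, j)` and column `(k, l)` vanishes unless `i + j = k + l`. Hence
`G ⊗ G` commutes with `R(z, q)` and `R₂₁(z)`, while `(G K G⁻¹)₁ = (G ⊗ G) K₁ (G ⊗ G)⁻¹` and likewise
for the second factor. Conjugating the reflection equation for `K` by `G ⊗ G` therefore gives the
reflection equation for `G K G⁻¹`.
-/

section Conjugation

variable {α : Type*} [Monoid α] {a b : α}

theorem conj_mul_conj (hba : b * a = 1) (x y : α) :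
    a * x * b * (a * y * b) = a * (x * y) * b := by
  simp only [mul_assoc]
  rw [← mul_assoc b a, hba, one_mul]

theorem conj_eq_self_of_commute (hab : a * b = 1) {x : α} (hx : Commute a x) :
    a * x * b = x := by
  rw [hx.eq, mul_assoc, hab, mul_one]

end Conjugation

theorem Matrix.commute_diagonal_of_apply_ne_zero {n α : Type*} [Fintype n] [DecidableEq n]
    [CommSemiring α] {d : n → α} {M : Matrix n n α} (h : ∀ p r, M p r ≠ 0 → d p = d r) :
    Commute (diagonal d) M := by
  ext p r
  rw [diagonal_mul, mul_diagonal]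
  by_cases hM : M p r = 0
  · simp [hM]
  · rw [h p r hM, mul_comm]

theorem Rcg_apply_eq_zero_of_add_ne (z q : ℂ) {p r : Fin 3 × Fin 3}
    (h : (p.1 : ℕ) + p.2 ≠ r.1 + r.2) : Rcg z q p r = 0 := by
  unfold Rcg
  split_ifs <;> simp_all [Fin.ext_iff] <;> omega

theorem Pflip_apply_eq_zero_of_add_ne {p r : Fin 3 × Fin 3}
    (h : (p.1 : ℕ) + p.2 ≠ r.1 + r.2) : Pflip p r = 0 := by
  refine if_neg fun ⟨h₁, h₂⟩ => h ?_
  rw [h₁, h₂, add_comm]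

section WeightDiagonal

variable (f : ℕ → ℂ)

theorem commute_diagonal_Rcg (z q : ℂ) :
    Commute (diagonal fun p : Fin 3 × Fin 3 => f (p.1 + p.2)) (Rcg z q) :=
  commute_diagonal_of_apply_ne_zero fun _ _ h => by
    rw [not_imp_comm.mp (Rcg_apply_eq_zero_of_add_ne z q) h]

theorem commute_diagonal_Pflip :
    Commute (diagonal fun p : Fin 3 × Fin 3 => f (p.1 + p.2)) Pflip :=
  commute_diagonal_of_apply_ne_zero fun _ _ h => by
    rw [not_imp_comm.mp Pflip_apply_eq_zero_of_add_ne h]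

theorem commute_diagonal_R21 (z q : ℂ) :
    Commute (diagonal fun p : Fin 3 × Fin 3 => f (p.1 + p.2)) (R21 z q) :=
  ((commute_diagonal_Pflip f).mul_right (commute_diagonal_Rcg f z q)).mul_right
    (commute_diagonal_Pflip f)

end WeightDiagonal

section Kronecker

variable {G H : Matrix (Fin 3) (Fin 3) ℂ}

theorem Mleft_conj (hGH : G * H = 1) (M : Matrix (Fin 3) (Fin 3) ℂ) :
    Mleft (G * M * H) = (G ⊗ₖ G) * Mleft M * (H ⊗ₖ H) := by
  simp only [Mleft, ← mul_kronecker_mul, mul_one, hGH]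

theorem Mright_conj (hGH : G * H = 1) (M : Matrix (Fin 3) (Fin 3) ℂ) :
    Mright (G * M * H) = (G ⊗ₖ G) * Mright M * (H ⊗ₖ H) := by
  simp only [Mright, ← mul_kronecker_mul, mul_one, hGH]

end Kronecker

theorem ReflEq.of_conj {q z₁ z₂ : ℂ} {K K' : ℂ → Matrix (Fin 3) (Fin 3) ℂ}
    {A B : Matrix (Fin 3 × Fin 3) (Fin 3 × Fin 3) ℂ} (hAB : A * B = 1) (hBA : B * A = 1)
    (hR : ∀ z, Commute A (Rcg z q)) (hR21 : ∀ z, Commute A (R21 z q))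
    (hl : ∀ z, Mleft (K' z) = A * Mleft (K z) * B) (hr : ∀ z, Mright (K' z) = A * Mright (K z) * B)
    (h : ReflEq q K z₁ z₂) : ReflEq q K' z₁ z₂ := by
  unfold ReflEq at h ⊢
  rw [hl, hr, ← conj_eq_self_of_commute hAB (hR (z₁ / z₂)),
    ← conj_eq_self_of_commute hAB (hR21 (z₁ * z₂)), ← conj_eq_self_of_commute hAB (hR (z₁ * z₂)),
    ← conj_eq_self_of_commute hAB (hR21 (z₁ / z₂))]
  simp only [conj_mul_conj hBA, h]

theorem Gmat_kronecker_Gmat (ω : ℂ) :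
    Gmat ω ⊗ₖ Gmat ω = diagonal fun p : Fin 3 × Fin 3 => ω ^ ((p.1 : ℕ) + p.2) := by
  rw [Gmat, diagonal_kronecker_diagonal]
  congr 1
  funext ⟨i, j⟩
  rw [pow_add]
  fin_cases i <;> fin_cases j <;> simp [pow_two]

theorem Gmat_mul_diagonal {ω : ℂ} (hω : ω ^ 3 = 1) : Gmat ω * diagonal ![1, ω ^ 2, ω] = 1 := by
  rw [Gmat, diagonal_mul_diagonal, ← diagonal_one]
  congr 1
  funext i
  fin_cases i <;> simp <;> linear_combination hω

theorem diagonal_mul_Gmat {ω : ℂ} (hω : ω ^ 3 = 1) : diagonal ![1, ω ^ 2, ω] * Gmat ω = 1 := by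
  rw [Gmat, diagonal_mul_diagonal, ← diagonal_one]
  congr 1
  funext i
  fin_cases i <;> simp <;> linear_combination hω

theorem G_conjugation_preserves_reflection_general (q : ℂ)
    (ω : ℂ) (hω : ω ^ 3 = 1) (K : ℂ → Matrix (Fin 3) (Fin 3) ℂ)
    (hK : ∀ z₁ z₂ : ℂ, z₁ ≠ 0 → z₂ ≠ 0 → z₁ ^ 2 ≠ z₂ ^ 2 → z₁ ^ 2 * z₂ ^ 2 ≠ 1 →
      ReflEq q K z₁ z₂) :
    ∀ z₁ z₂ : ℂ, z₁ ≠ 0 → z₂ ≠ 0 → z₁ ^ 2 ≠ z₂ ^ 2 → z₁ ^ 2 * z₂ ^ 2 ≠ 1 →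
      ReflEq q (fun z => Gmat ω * K z * Matrix.diagonal ![1, ω ^ 2, ω]) z₁ z₂ := by
  intro z₁ z₂ h₁ h₂ h₃ h₄
  have hGH := Gmat_mul_diagonal hω
  have hHG := diagonal_mul_Gmat hω
  refine (hK z₁ z₂ h₁ h₂ h₃ h₄).of_conj (A := Gmat ω ⊗ₖ Gmat ω)
    (B := diagonal ![1, ω ^ 2, ω] ⊗ₖ diagonal ![1, ω ^ 2, ω]) ?_ ?_ (fun z => ?_) (fun z => ?_)
    (fun z => Mleft_conj hGH (K z)) (fun z => Mright_conj hGH (K z))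
  · rw [← mul_kronecker_mul, hGH, one_kronecker_one]
  · rw [← mul_kronecker_mul, hHG, one_kronecker_one]
  · rw [Gmat_kronecker_Gmat]
    exact commute_diagonal_Rcg _ z q
  · rw [Gmat_kronecker_Gmat]
    exact commute_diagonal_R21 _ z q

/-- `G`-conjugation preserves solutions of the reflection equation. -/
theorem G_conjugation_preserves_reflection (q : ℂ) (hq : q ≠ 0) (hq2 : q ^ 2 ≠ 1)
    (ω : ℂ) (hω : ω ^ 3 = 1) (K : ℂ → Matrix (Fin 3) (Fin 3) ℂ)
    (hK : ∀ z₁ z₂ : ℂ, z₁ ≠ 0 → z₂ ≠ 0 → z₁ ^ 2 ≠ z₂ ^ 2 → z₁ ^ 2 * z₂ ^ 2 ≠ 1 →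
      ReflEq q K z₁ z₂) :
    ∀ z₁ z₂ : ℂ, z₁ ≠ 0 → z₂ ≠ 0 → z₁ ^ 2 ≠ z₂ ^ 2 → z₁ ^ 2 * z₂ ^ 2 ≠ 1 →
      ReflEq q (fun z => Gmat ω * K z * Matrix.diagonal ![1, ω ^ 2, ω]) z₁ z₂ :=
  G_conjugation_preserves_reflection_general q ω hω K hK
end

section
/- The (00|00) entry of the reflection-equation difference factors through the bilinear form A₅: for all q, z₁, z₂ ∈ ℂ with q ≠ 0, q² ≠ 1, z₁ ≠ 0, z₂ ≠ 0, z₁² ≠ z₂², z₁²z₂² ≠ 1, and for all 3×3 complex matrices A and B, the entry of D := R(z₁/z₂,q) A₁ R₂₁(z₁z₂) B₂ − B₂ R(z₁z₂,q) A₁ R₂₁(z₁/z₂) in row (0,0), column (0,0) satisfies (q² − 1)(z₂² − z₁²)(1 − z₁²z₂²) · D^{00}_{00} = (q²z₂² − z₁²) · (A₀₁B₁₀ − A₁₀B₀₁ + A₀₂B₂₀ − A₂₀B₀₂), where A_{ij} denotes the entry of A in row i, column j. -/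
open Matrix Kronecker

/-!
Row `(0,0)` and column `(0,0)` of `R(z,q)` have a single nonzero entry, the diagonal one. Hence
both products in `D` reduce at `(00|00)` to `cgDiag (z₁/z₂) q` times a sum over `c` of
`A₀c R(z₁z₂)^{0c}_{c0} B_c0`, resp. `B₀c R(z₁z₂)^{0c}_{c0} A_c0`. The `c = 0` terms cancel, and for
`c ≠ 0` the entry `R^{0c}_{c0} = (z₁z₂)⁻¹/(z₁z₂ - (z₁z₂)⁻¹)` factors out of the bilinear form `A₅`;
what remains is clearing denominators.
-/

/-- The diagonal entries `R^{ii}_{ii}`; `cgSwap z` is `R^{ij}_{ji}` for `i < j`. -/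
noncomputable def cgDiag (z q : ℂ) : ℂ := (q * z⁻¹ - q⁻¹ * z) / ((q - q⁻¹) * (z - z⁻¹))

noncomputable def cgSwap (z : ℂ) : ℂ := z⁻¹ / (z - z⁻¹)

lemma Rcg_zero_zero_apply (z q : ℂ) (r : Fin 3 × Fin 3) :
    Rcg z q (0, 0) r = if r = (0, 0) then cgDiag z q else 0 := by
  obtain ⟨k, l⟩ := r
  fin_cases k <;> fin_cases l <;> simp [Rcg, cgDiag]

lemma Rcg_apply_zero_zero (z q : ℂ) (p : Fin 3 × Fin 3) :
    Rcg z q p (0, 0) = if p = (0, 0) then cgDiag z q else 0 := by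
  obtain ⟨i, j⟩ := p
  fin_cases i <;> fin_cases j <;> simp [Rcg, cgDiag]

lemma Rcg_apply_zero_fst_zero_snd (z q : ℂ) (c e : Fin 3) :
    Rcg z q (0, c) (e, 0) = if c = e then (if c = 0 then cgDiag z q else cgSwap z) else 0 := by
  fin_cases c <;> fin_cases e <;> simp [Rcg, cgDiag, cgSwap]

lemma R21_apply (z q : ℂ) (p r : Fin 3 × Fin 3) :
    R21 z q p r = Rcg z q (p.2, p.1) (r.2, r.1) := by
  simp [R21, Matrix.mul_apply, Pflip, Fintype.sum_prod_type, ite_and]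

lemma Rcg_mul_apply_zero_zero (z q : ℂ) (M : Matrix (Fin 3 × Fin 3) (Fin 3 × Fin 3) ℂ)
    (r : Fin 3 × Fin 3) : (Rcg z q * M) (0, 0) r = cgDiag z q * M (0, 0) r := by
  simp [Matrix.mul_apply, Rcg_zero_zero_apply]

lemma mul_R21_apply_zero_zero (z q : ℂ) (M : Matrix (Fin 3 × Fin 3) (Fin 3 × Fin 3) ℂ)
    (p : Fin 3 × Fin 3) : (M * R21 z q) p (0, 0) = M p (0, 0) * cgDiag z q := by
  simp [Matrix.mul_apply, R21_apply, Rcg_apply_zero_zero, Prod.ext_iff, Fintype.sum_prod_type,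
    ite_and]

lemma Mleft_mul_apply (A : Matrix (Fin 3) (Fin 3) ℂ) (M : Matrix (Fin 3 × Fin 3) (Fin 3 × Fin 3) ℂ)
    (a b : Fin 3) (r : Fin 3 × Fin 3) : (Mleft A * M) (a, b) r = ∑ c, A a c * M (c, b) r := by
  simp [Mleft, Matrix.mul_apply, Fintype.sum_prod_type, Matrix.one_apply]

lemma mul_Mleft_apply (A : Matrix (Fin 3) (Fin 3) ℂ) (M : Matrix (Fin 3 × Fin 3) (Fin 3 × Fin 3) ℂ)
    (p : Fin 3 × Fin 3) (c d : Fin 3) : (M * Mleft A) p (c, d) = ∑ a, M p (a, d) * A a c := by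
  simp [Mleft, Matrix.mul_apply, Fintype.sum_prod_type, Matrix.one_apply]

lemma Mright_mul_apply (B : Matrix (Fin 3) (Fin 3) ℂ) (M : Matrix (Fin 3 × Fin 3) (Fin 3 × Fin 3) ℂ)
    (a b : Fin 3) (r : Fin 3 × Fin 3) : (Mright B * M) (a, b) r = ∑ f, B b f * M (a, f) r := by
  simp [Mright, Matrix.mul_apply, Fintype.sum_prod_type, Matrix.one_apply]

lemma mul_Mright_apply (B : Matrix (Fin 3) (Fin 3) ℂ) (M : Matrix (Fin 3 × Fin 3) (Fin 3 × Fin 3) ℂ)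
    (p : Fin 3 × Fin 3) (d e : Fin 3) : (M * Mright B) p (d, e) = ∑ f, M p (d, f) * B f e := by
  simp [Mright, Matrix.mul_apply, Fintype.sum_prod_type, Matrix.one_apply]

lemma reflection_difference_apply_zero_zero (w u q : ℂ) (A B : Matrix (Fin 3) (Fin 3) ℂ) :
    (Rcg w q * Mleft A * R21 u q * Mright B - Mright B * Rcg u q * Mleft A * R21 w q) (0, 0) (0, 0)
      = cgDiag w q * cgSwap u *
        (A 0 1 * B 1 0 - A 1 0 * B 0 1 + A 0 2 * B 2 0 - A 2 0 * B 0 2) := by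
  have left : (Rcg w q * Mleft A * R21 u q * Mright B) (0, 0) (0, 0)
      = cgDiag w q * ∑ e, ∑ c, A 0 c * Rcg u q (0, c) (e, 0) * B e 0 := by
    simp only [Rcg_mul_apply_zero_zero, Mleft_mul_apply, mul_Mright_apply,
      R21_apply, Finset.mul_sum, Finset.sum_mul, mul_assoc]
  have right : (Mright B * Rcg u q * Mleft A * R21 w q) (0, 0) (0, 0)
      = (∑ e, ∑ c, B 0 e * Rcg u q (0, e) (c, 0) * A c 0) * cgDiag w q := by
    simp only [mul_R21_apply_zero_zero, Mright_mul_apply, mul_Mleft_apply,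
      Finset.mul_sum, mul_assoc]
  rw [Matrix.sub_apply, left, right]
  simp [Fin.sum_univ_three, Rcg_apply_zero_fst_zero_snd]
  ring

lemma cgDiag_div_mul {q z₁ z₂ : ℂ} (hq : q ≠ 0) (hq2 : q ^ 2 ≠ 1) (hz₁ : z₁ ≠ 0) (hz₂ : z₂ ≠ 0)
    (hzz : z₁ ^ 2 ≠ z₂ ^ 2) :
    (q ^ 2 - 1) * (z₁ ^ 2 - z₂ ^ 2) * cgDiag (z₁ / z₂) q = q ^ 2 * z₂ ^ 2 - z₁ ^ 2 := by
  have hq2' : q ^ 2 - 1 ≠ 0 := sub_ne_zero.mpr hq2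
  have hzz' : z₁ ^ 2 - z₂ ^ 2 ≠ 0 := sub_ne_zero.mpr hzz
  rw [cgDiag]
  field_simp

lemma sq_sub_one_mul_cgSwap {z : ℂ} (hz : z ≠ 0) (hz2 : z ^ 2 ≠ 1) :
    (z ^ 2 - 1) * cgSwap z = 1 := by
  have hz2' : z ^ 2 - 1 ≠ 0 := sub_ne_zero.mpr hz2
  rw [cgSwap]
  field_simp

lemma prefactor_mul_cgDiag_mul_cgSwap {q z₁ z₂ : ℂ} (hq : q ≠ 0) (hq2 : q ^ 2 ≠ 1) (hz₁ : z₁ ≠ 0)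
    (hz₂ : z₂ ≠ 0) (hzz : z₁ ^ 2 ≠ z₂ ^ 2) (hz₁₂ : z₁ ^ 2 * z₂ ^ 2 ≠ 1) :
    (q ^ 2 - 1) * (z₂ ^ 2 - z₁ ^ 2) * (1 - z₁ ^ 2 * z₂ ^ 2)
        * (cgDiag (z₁ / z₂) q * cgSwap (z₁ * z₂))
      = q ^ 2 * z₂ ^ 2 - z₁ ^ 2 := by
  calc _ = ((q ^ 2 - 1) * (z₁ ^ 2 - z₂ ^ 2) * cgDiag (z₁ / z₂) q)
        * (((z₁ * z₂) ^ 2 - 1) * cgSwap (z₁ * z₂)) := by ring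
    _ = q ^ 2 * z₂ ^ 2 - z₁ ^ 2 := by
      rw [cgDiag_div_mul hq hq2 hz₁ hz₂ hzz,
        sq_sub_one_mul_cgSwap (mul_ne_zero hz₁ hz₂) (by rwa [mul_pow]), mul_one]

/-- The `(00|00)` entry of the reflection-equation difference factors through `A₅`. -/
theorem reflection_difference_0000_entry (q z₁ z₂ : ℂ) (hq : q ≠ 0)
    (hq2 : q ^ 2 ≠ 1) (hz₁ : z₁ ≠ 0) (hz₂ : z₂ ≠ 0) (hzz : z₁ ^ 2 ≠ z₂ ^ 2)
    (hz₁₂ : z₁ ^ 2 * z₂ ^ 2 ≠ 1) (A B : Matrix (Fin 3) (Fin 3) ℂ) :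
    let D := Rcg (z₁ / z₂) q * Mleft A * R21 (z₁ * z₂) q * Mright B
      - Mright B * Rcg (z₁ * z₂) q * Mleft A * R21 (z₁ / z₂) q
    (q ^ 2 - 1) * (z₂ ^ 2 - z₁ ^ 2) * (1 - z₁ ^ 2 * z₂ ^ 2) * D (0, 0) (0, 0) =
      (q ^ 2 * z₂ ^ 2 - z₁ ^ 2) *
        (A 0 1 * B 1 0 - A 1 0 * B 0 1 + A 0 2 * B 2 0 - A 2 0 * B 0 2) := by
  dsimp only
  rw [reflection_difference_apply_zero_zero, ← mul_assoc,
    prefactor_mul_cgDiag_mul_cgSwap hq hq2 hz₁ hz₂ hzz hz₁₂]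
end

section
/- Let a₀,a₁,a₂,a₃,a₄,ā₀,ā₁,ā₂,ā₃,ā₄ ∈ ℂ satisfy the 14 relations: a₀ā₀ = a₁ā₁; a₂ā₂ = a₃ā₃; a₀² = a₁a₄; ā₀² = ā₁ā₄; a₁ā₀ = a₀ā₄; ā₁a₀ = ā₀a₄; a₀a₃ = a₁ā₂; ā₀ā₃ = ā₁a₂; a₀a₂ = ā₃a₁; ā₀ā₂ = a₃ā₁; a₂ā₀ = ā₃ā₄; ā₂a₀ = a₃a₄; a₂a₄ = a₀ā₃; ā₂ā₄ = ā₀a₃. If at least one of a₀, ā₀, a₁, ā₁, a₂, ā₂, a₃, ā₃ is nonzero, then a₀ā₀ = a₄ā₄. -/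
/-!
Where `a₀ ≠ 0`, the relations `a₀² = a₁a₄` and `a₁ā₀ = a₀ā₄` give
`a₀ (a₀ā₀ - a₄ā₄) = ā₀ (a₀² - a₁a₄) + a₄ (a₁ā₀ - a₀ā₄) = 0`; the case `ā₀ ≠ 0` is the same
argument with the bars exchanged. When `a₀ = ā₀ = 0`, the relations say that `a₁, a₂, a₃`
annihilate `a₄` and `ā₁, ā₂, ā₃` annihilate `ā₄`, so one of `a₄, ā₄` vanishes and both sides are `0`.
-/

theorem mul_eq_mul_of_sq_eq_mul {R : Type*} [CommRing R] [NoZeroDivisors R] {x y z x' z' : R}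
    (hx : x ≠ 0) (hsq : x ^ 2 = y * z) (hy : y * x' = x * z') : x * x' = z * z' := by
  have h : x * (x * x' - z * z') = 0 := by linear_combination x' * hsq + z * hy
  exact sub_eq_zero.mp ((mul_eq_zero.mp h).resolve_left hx)

theorem variety_extra_relation_general (a₀ a₁ a₂ a₃ a₄ a₀' a₁' a₂' a₃' a₄' : ℂ)
    (h3 : a₀ ^ 2 = a₁ * a₄) (h4 : a₀' ^ 2 = a₁' * a₄')
    (h5 : a₁ * a₀' = a₀ * a₄') (h6 : a₁' * a₀ = a₀' * a₄)
    (h11 : a₂ * a₀' = a₃' * a₄') (h12 : a₂' * a₀ = a₃ * a₄)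
    (h13 : a₂ * a₄ = a₀ * a₃') (h14 : a₂' * a₄' = a₀' * a₃)
    (hne : a₀ ≠ 0 ∨ a₀' ≠ 0 ∨ a₁ ≠ 0 ∨ a₁' ≠ 0 ∨ a₂ ≠ 0 ∨ a₂' ≠ 0 ∨ a₃ ≠ 0 ∨ a₃' ≠ 0) :
    a₀ * a₀' = a₄ * a₄' := by
  rcases ne_or_eq a₀ 0 with h0 | rfl
  · exact mul_eq_mul_of_sq_eq_mul h0 h3 h5
  rcases ne_or_eq a₀' 0 with h0' | rfl
  · rw [mul_comm, mul_comm a₄]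
    exact mul_eq_mul_of_sq_eq_mul h0' h4 h6
  by_contra hprod
  obtain ⟨ha₄, ha₄'⟩ : a₄ ≠ 0 ∧ a₄' ≠ 0 := by simpa [eq_comm] using hprod
  simp_all [eq_comm (a := (0 : ℂ))]

/-- Points of the variety `𝒱_I` satisfy `a₀a₀' = a₄a₄'` whenever one of the first
eight coordinates is nonzero. -/
theorem variety_extra_relation (a₀ a₁ a₂ a₃ a₄ a₀' a₁' a₂' a₃' a₄' : ℂ)
    (h1 : a₀ * a₀' = a₁ * a₁') (h2 : a₂ * a₂' = a₃ * a₃')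
    (h3 : a₀ ^ 2 = a₁ * a₄) (h4 : a₀' ^ 2 = a₁' * a₄')
    (h5 : a₁ * a₀' = a₀ * a₄') (h6 : a₁' * a₀ = a₀' * a₄)
    (h7 : a₀ * a₃ = a₁ * a₂') (h8 : a₀' * a₃' = a₁' * a₂)
    (h9 : a₀ * a₂ = a₃' * a₁) (h10 : a₀' * a₂' = a₃ * a₁')
    (h11 : a₂ * a₀' = a₃' * a₄') (h12 : a₂' * a₀ = a₃ * a₄)
    (h13 : a₂ * a₄ = a₀ * a₃') (h14 : a₂' * a₄' = a₀' * a₃)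
    (hne : a₀ ≠ 0 ∨ a₀' ≠ 0 ∨ a₁ ≠ 0 ∨ a₁' ≠ 0 ∨ a₂ ≠ 0 ∨ a₂' ≠ 0 ∨ a₃ ≠ 0 ∨ a₃' ≠ 0) :
    a₀ * a₀' = a₄ * a₄' :=
  variety_extra_relation_general a₀ a₁ a₂ a₃ a₄ a₀' a₁' a₂' a₃' a₄' h3 h4 h5 h6 h11 h12 h13 h14 hne
end

section
/- Parametrization of the solution variety: a tuple (a₀,a₁,a₂,a₃,a₄,ā₀,ā₁,ā₂,ā₃,ā₄) ∈ ℂ¹⁰ satisfies the 15 relations a₀ā₀ = a₄ā₄; a₀ā₀ = a₁ā₁; a₂ā₂ = a₃ā₃; a₀² = a₁a₄; ā₀² = ā₁ā₄; a₁ā₀ = a₀ā₄; ā₁a₀ = ā₀a₄; a₀a₃ = a₁ā₂; ā₀ā₃ = ā₁a₂; a₀a₂ = ā₃a₁; ā₀ā₂ = a₃ā₁; a₂ā₀ = ā₃ā₄; ā₂a₀ = a₃a₄; a₂a₄ = a₀ā₃; ā₂ā₄ = ā₀a₃ if and only if there exist A₁, A₂, Ā₁, Ā₂, B₁, B₂,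 B̄₁, B̄₂ ∈ ℂ such that a₀ = A₁A₂, a₁ = A₁², a₄ = A₂², ā₀ = Ā₁Ā₂, ā₁ = Ā₁², ā₄ = Ā₂², a₂ = B₂B̄₂, ā₂ = B₁B̄₁, a₃ = B₁B̄₂, ā₃ = B̄₁B₂, and moreover A₁Ā₁ = A₂Ā₂, Ā₁B̄₂ = Ā₂B̄₁, and B̄₂A₂ = B̄₁A₁. -/
/-!
The relations `a₀² = a₁a₄` and `ā₀² = ā₁ā₄` produce `A₁, A₂` and `Ā₁, Ā₂` by extracting square
roots. The relation `a₂ā₂ = a₃ā₃` says that the matrix `[[ā₂, a₃], [ā₃, a₂]]` has rank at most one,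
so it is an outer product `(B₁, B₂) ⊗ (B̄₁, B̄₂)` in which `(B̄₁, B̄₂)` can be taken to be one of its
rows. The squares of `A₁Ā₁ - A₂Ā₂` and of the two compatibility defects evaluated on either row are
combinations of the remaining relations, so these quantities vanish and `(B̄₁, B̄₂)` is compatible.
-/

lemma eq_of_sub_sq_eq_zero {R : Type*} [CommRing R] [IsReduced R] {x y : R}
    (h : (x - y) ^ 2 = 0) : x = y :=
  sub_eq_zero.mp (IsReduced.eq_zero _ ⟨2, h⟩)

lemma exists_mul_sq_sq_of_sq_eq_mul {K : Type*} [Field K] [IsAlgClosed K] {x y z : K}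
    (h : x ^ 2 = y * z) : ∃ u v : K, x = u * v ∧ y = u ^ 2 ∧ z = v ^ 2 := by
  obtain ⟨u, rfl⟩ := IsAlgClosed.exists_pow_nat_eq y two_pos
  by_cases hu : u = 0
  · obtain ⟨v, rfl⟩ := IsAlgClosed.exists_pow_nat_eq z two_pos
    have hx : x = 0 := pow_eq_zero_iff two_ne_zero |>.mp (by simp [h, hu])
    exact ⟨0, v, by simp [hx], by simp [hu], rfl⟩
  · refine ⟨u, x / u, by field_simp, rfl, ?_⟩
    field_simp
    linear_combination -h

/-- `[[p, q], [r, s]] = x ⊗ y` with `y` one of the two rows, so `y` inherits any property `P`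
common to both rows. -/
lemma exists_outer_product_of_mul_eq_mul {K : Type*} [Field K] {p q r s : K}
    (h : p * s = q * r) (P : K → K → Prop) (hpq : P p q) (hrs : P r s) :
    ∃ x₁ x₂ y₁ y₂ : K, P y₁ y₂ ∧ p = x₁ * y₁ ∧ q = x₁ * y₂ ∧ r = x₂ * y₁ ∧ s = x₂ * y₂ := by
  by_cases hp : p = 0
  · by_cases hq : q = 0
    · exact ⟨0, 1, r, s, hrs, by simp [hp], by simp [hq], by ring, by ring⟩
    · have hr : r = 0 := by simpa [hp, hq] using h
      exact ⟨1, s / q, p, q, hpq, by ring, by ring, by simp [hp, hr], by field_simp⟩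
  · refine ⟨1, r / p, p, q, hpq, by ring, by ring, by field_simp, ?_⟩
    field_simp
    linear_combination h

/-- Parametrization of the solution variety `𝒱_I`. -/
theorem variety_parametrization (a₀ a₁ a₂ a₃ a₄ a₀' a₁' a₂' a₃' a₄' : ℂ) :
    (a₀ * a₀' = a₄ * a₄' ∧ a₀ * a₀' = a₁ * a₁' ∧ a₂ * a₂' = a₃ * a₃' ∧
      a₀ ^ 2 = a₁ * a₄ ∧ a₀' ^ 2 = a₁' * a₄' ∧
      a₁ * a₀' = a₀ * a₄' ∧ a₁' * a₀ = a₀' * a₄ ∧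
      a₀ * a₃ = a₁ * a₂' ∧ a₀' * a₃' = a₁' * a₂ ∧
      a₀ * a₂ = a₃' * a₁ ∧ a₀' * a₂' = a₃ * a₁' ∧
      a₂ * a₀' = a₃' * a₄' ∧ a₂' * a₀ = a₃ * a₄ ∧
      a₂ * a₄ = a₀ * a₃' ∧ a₂' * a₄' = a₀' * a₃) ↔
    (∃ A₁ A₂ A₁' A₂' B₁ B₂ B₁' B₂' : ℂ,
      a₀ = A₁ * A₂ ∧ a₁ = A₁ ^ 2 ∧ a₄ = A₂ ^ 2 ∧
      a₀' = A₁' * A₂' ∧ a₁' = A₁' ^ 2 ∧ a₄' = A₂' ^ 2 ∧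
      a₂ = B₂ * B₂' ∧ a₂' = B₁ * B₁' ∧ a₃ = B₁ * B₂' ∧ a₃' = B₁' * B₂ ∧
      A₁ * A₁' = A₂ * A₂' ∧ A₁' * B₂' = A₂' * B₁' ∧ B₂' * A₂ = B₁' * A₁) := by
  constructor
  · rintro ⟨h1, h2, h3, h4, h5, -, -, h8, h9, h10, h11, h12, h13, h14, h15⟩
    obtain ⟨A₁, A₂, rfl, rfl, rfl⟩ := exists_mul_sq_sq_of_sq_eq_mul h4
    obtain ⟨A₁', A₂', rfl, rfl, rfl⟩ := exists_mul_sq_sq_of_sq_eq_mul h5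
    have hA : A₁ * A₁' = A₂ * A₂' := eq_of_sub_sq_eq_zero (by linear_combination -h1 - h2)
    obtain ⟨B₁, B₂, B₁', B₂', ⟨hA'B', hB'A⟩, rfl, rfl, h₃', rfl⟩ :=
      exists_outer_product_of_mul_eq_mul (p := a₂') (q := a₃) (r := a₃') (s := a₂)
        (by linear_combination h3) (fun y₁ y₂ => A₁' * y₂ = A₂' * y₁ ∧ y₂ * A₂ = y₁ * A₁)
        ⟨eq_of_sub_sq_eq_zero (by linear_combination -a₃ * h11 + a₂' * h15),
          eq_of_sub_sq_eq_zero (by linear_combination -a₂' * h8 - a₃ * h13)⟩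
        ⟨eq_of_sub_sq_eq_zero (by linear_combination -a₂ * h9 - a₃' * h12),
          eq_of_sub_sq_eq_zero (by linear_combination -a₃' * h10 + a₂ * h14)⟩
    exact ⟨A₁, A₂, A₁', A₂', B₁, B₂, B₁', B₂', rfl, rfl, rfl, rfl, rfl, rfl, rfl, rfl, rfl,
      h₃'.trans (mul_comm _ _), hA, hA'B', hB'A⟩
  · rintro ⟨A₁, A₂, A₁', A₂', B₁, B₂, B₁', B₂', rfl, rfl, rfl, rfl, rfl, rfl, rfl, rfl, rfl, rfl,
      hA, hA'B', hB'A⟩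
    refine ⟨?_, ?_, by ring, by ring, by ring, ?_, ?_, ?_, ?_, ?_, ?_, ?_, ?_, ?_, ?_⟩
    · linear_combination A₂ * A₂' * hA
    · linear_combination -A₁ * A₁' * hA
    · linear_combination A₁ * A₂' * hA
    · linear_combination A₁' * A₂ * hA
    · linear_combination A₁ * B₁ * hB'A
    · linear_combination -A₁' * B₂ * hA'B'
    · linear_combination A₁ * B₂ * hB'A
    · linear_combination -A₁' * B₁ * hA'B'
    · linear_combination B₂ * A₂' * hA'B'
    · linear_combination -A₂ * B₁ * hB'A
    · linear_combination A₂ * B₂ * hB'A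
    · linear_combination -A₂' * B₁ * hA'B'
end

section
/- The common lower-triangular family lies in both solution families: for all c₁, c₂, c₃, c₄ ∈ ℂ, define C(z) := [[c₃ + c₄z², 0, 0],[c₂(z⁴−1), c₄z² + c₃z⁴, 0],[c₁(z⁴−1), 0, c₄z² + c₃z⁴]] for z ≠ 0. Then (a) C(z) = K_II(z; b=c₄, F₁=0, F₂=1, G₁=c₃, G₂=−c₂, G₃=c₁) for every z ≠ 0, and (b) there exist B₁, B₂, D₁, D₂, E₁, E₂, E₃ ∈ ℂ such that C(z) = K_I(z; B₁,B₂,D₁,D₂,E₁,E₂,E₃) for every z ≠ 0. -/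
open Matrix Kronecker

/-- The common lower-triangular family `C(z)`. -/
noncomputable def Cmat (z c₁ c₂ c₃ c₄ : ℂ) : Matrix (Fin 3) (Fin 3) ℂ :=
  !![c₃ + c₄ * z ^ 2, 0, 0;
     c₂ * (z ^ 4 - 1), c₄ * z ^ 2 + c₃ * z ^ 4, 0;
     c₁ * (z ^ 4 - 1), 0, c₄ * z ^ 2 + c₃ * z ^ 4]

/-!
Conjugation by `T` reverses both indices of a matrix, turning the upper-triangular blocks of
both families into lower-triangular ones. Setting `F₁ = 0` in `K_II`, resp. `D₁ = 0` in `K_I`,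
reduces the unreflected blocks to a multiple of `z² Id`, so what remains already has the shape
of `C(z)`; in `K_I` the coefficients `c₄`, `c₁` then appear as the squares `E₁²`, `E₃²`.
-/

lemma Tmat_mul_mul_Tmat_s19 (a b c d e f g h i : ℂ) :
    Tmat * !![a, b, c; d, e, f; g, h, i] * Tmat = !![i, h, g; f, e, d; c, b, a] := by
  have hT : Tmat = !![0, 0, 1; 0, 1, 0; 1, 0, 0] := by
    ext i j; fin_cases i <;> fin_cases j <;> simp [Tmat]
  simp [hT]

lemma KII_zero_one {z : ℂ} (hz : z ≠ 0) (b G₁ G₂ G₃ : ℂ) :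
    KII z b 0 1 G₁ G₂ G₃ =
      !![b * z ^ 2 + G₁, 0, 0;
         -G₂ * (z ^ 4 - 1), b * z ^ 2 + G₁ * z ^ 4, 0;
         G₃ * (z ^ 4 - 1), 0, b * z ^ 2 + G₁ * z ^ 4] := by
  rw [KII, KII0, KII0, Matrix.mul_smul, Matrix.smul_mul, Tmat_mul_mul_Tmat_s19]
  ext i j
  fin_cases i <;> fin_cases j <;> simp <;> field_simp

lemma KI_of_D₁_eq_zero {z : ℂ} (hz : z ≠ 0) (B₁ B₂ D₂ E₁ E₂ E₃ : ℂ) :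
    KI z B₁ B₂ 0 D₂ E₁ E₂ E₃ =
      !![E₁ ^ 2 * D₂ ^ 2 * z ^ 2 + D₂ * E₂ * B₂, 0, 0;
         D₂ * E₂ * B₁ * (z ^ 4 - 1), E₁ ^ 2 * D₂ ^ 2 * z ^ 2 + D₂ * E₂ * B₂ * z ^ 4, 0;
         E₃ ^ 2 * D₂ ^ 2 * (z ^ 4 - 1), 0, E₁ ^ 2 * D₂ ^ 2 * z ^ 2 + D₂ * E₂ * B₂ * z ^ 4] := by
  rw [KI, KI0, KI0, KI1, KI1, Matrix.mul_smul, Matrix.smul_mul, Tmat_mul_mul_Tmat_s19,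
    Matrix.mul_smul, Matrix.smul_mul, Tmat_mul_mul_Tmat_s19]
  ext i j
  fin_cases i <;> fin_cases j <;> simp <;> field_simp
  ring

lemma Cmat_eq_KII {z : ℂ} (hz : z ≠ 0) (c₁ c₂ c₃ c₄ : ℂ) :
    Cmat z c₁ c₂ c₃ c₄ = KII z c₄ 0 1 c₃ (-c₂) c₁ := by
  rw [KII_zero_one hz, Cmat]
  ring_nf

lemma Cmat_eq_KI {z : ℂ} (hz : z ≠ 0) {c₁ c₂ c₃ c₄ E₁ E₃ : ℂ} (hE₁ : E₁ ^ 2 = c₄)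
    (hE₃ : E₃ ^ 2 = c₁) : Cmat z c₁ c₂ c₃ c₄ = KI z c₂ c₃ 0 1 E₁ 1 E₃ := by
  rw [KI_of_D₁_eq_zero hz, Cmat, hE₁, hE₃]
  ring_nf

/-- The common lower-triangular family lies in both solution families. -/
theorem common_family_in_both (c₁ c₂ c₃ c₄ : ℂ) :
    (∀ z : ℂ, z ≠ 0 → Cmat z c₁ c₂ c₃ c₄ = KII z c₄ 0 1 c₃ (-c₂) c₁) ∧
    (∃ B₁ B₂ D₁ D₂ E₁ E₂ E₃ : ℂ, ∀ z : ℂ, z ≠ 0 →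
      Cmat z c₁ c₂ c₃ c₄ = KI z B₁ B₂ D₁ D₂ E₁ E₂ E₃) := by
  obtain ⟨E₁, hE₁⟩ := IsAlgClosed.exists_pow_nat_eq c₄ two_pos
  obtain ⟨E₃, hE₃⟩ := IsAlgClosed.exists_pow_nat_eq c₁ two_pos
  exact ⟨fun z hz => Cmat_eq_KII hz c₁ c₂ c₃ c₄,
    ⟨c₂, c₃, 0, 1, E₁, 1, E₃, fun z hz => Cmat_eq_KI hz hE₁ hE₃⟩⟩
end
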